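/- arXiv:2105.11719 — 4 statements merged into one kernel-verified Lean document; each statement's English description precedes it below -/
import Mathlib

section
/- Let N be an even integer with N ≥ 4 and 4 ∣ N. Then the least positive integer n such that the constant n-tuple (N/2 mod N, …, N/2 mod N) of elements of ℤ/Nℤ satisfies M_n(N/2, …, N/2) = Id or M_n(N/2, …, N/2) = −Id is n = 4; moreover the 4-tuple (N/2, N/2, N/2, N/2) is an irreducible solution of (E_N). -/
/-!
With `c = N/2` in `ℤ/Nℤ` and `4 ∣ N` we have `c² = 0` and `2c = 0`, so
`M₂(c, c) = -Id + c·J` with `J = [[0,-1],[1,0]]`, and `M₄ = M₂² = Id - 2c·J + c²·J² = Id`.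
Entries of `M₁`, `M₂`, `M₃` that must vanish or equal `±1` rule out the smaller sizes.
A decomposition of a 4-tuple as `a ⊕ b` forces `a` and `b` to have size 3, and the
middle entry of a solution of size 3 is `±1`; it reappears as the last entry of `a ⊕ b`,
which is `c`, impossible since `c² = 0`.
-/

open Matrix

/-- `Mmat [a₁, …, aₙ]` is the product `[[aₙ,-1],[1,0]] ⋯ [[a₁,-1],[1,0]]`. -/
def Mmat {R : Type*} [CommRing R] : List R → Matrix (Fin 2) (Fin 2) R
  | [] => 1
  | a :: t => Mmat t * !![a, -1; 1, 0]

/-- A tuple is a solution of (E_N) if its matrix is `Id` or `-Id`. -/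
def IsSolution {R : Type*} [CommRing R] (l : List R) : Prop :=
  Mmat l = 1 ∨ Mmat l = -1

/-- The sum `(a₁,…,aₙ) ⊕ (b₁,…,bₘ) = (a₁+bₘ, a₂,…,aₙ₋₁, aₙ+b₁, b₂,…,bₘ₋₁)`. -/
def oplus {R : Type*} [CommRing R] (a b : List R) : List R :=
  List.ofFn (fun i : Fin (a.length + b.length - 2) =>
    if (i : ℕ) = 0 then a.getD 0 0 + b.getD (b.length - 1) 0
    else if (i : ℕ) < a.length - 1 then a.getD (i : ℕ) 0
    else if (i : ℕ) = a.length - 1 then a.getD (a.length - 1) 0 + b.getD 0 0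
    else b.getD ((i : ℕ) - a.length + 1) 0)

/-- Two tuples are equivalent if one is a cyclic permutation of the other or of
its reversal. -/
def TupleEquiv {R : Type*} (a b : List R) : Prop :=
  (∃ k, b = a.rotate k) ∨ (∃ k, b = a.reverse.rotate k)

/-- A solution `c` (of size ≥ 3) is reducible if `c ∼ a ⊕ b` with `b` a solution,
`a` of size ≥ 3 and `b` of size ≥ 3. -/
def Reducible {R : Type*} [CommRing R] (c : List R) : Prop :=
  ∃ a b : List R, 3 ≤ a.length ∧ 3 ≤ b.length ∧ IsSolution b ∧
    TupleEquiv c (oplus a b)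

/-- The alternating tuple `(k, -k, k, -k, …)` of length `n`. -/
def altList {R : Type*} [CommRing R] (n : ℕ) (k : R) : List R :=
  List.ofFn (fun i : Fin n => if (i : ℕ) % 2 = 0 then k else -k)

/-- Continuants: `K₋₁ = 0`, `K₀ = 1`,
`Kₙ(x₁,…,xₙ) = x₁·Kₙ₋₁(x₂,…,xₙ) - Kₙ₋₂(x₃,…,xₙ)`. -/
def contK {R : Type*} [CommRing R] : List R → R
  | [] => 1
  | [x] => x
  | x :: y :: t => x * contK (y :: t) - contK t


theorem TupleEquiv.eq_replicate {n : ℕ} {α : Type*} {c : α} {l : List α}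
    (h : TupleEquiv (List.replicate n c) l) : l = List.replicate n c := by
  rcases h with ⟨k, rfl⟩ | ⟨k, rfl⟩
  · exact List.rotate_replicate c n k
  · rw [List.reverse_replicate, List.rotate_replicate]

variable {R : Type*} [CommRing R]

theorem Mmat_append (l₁ l₂ : List R) : Mmat (l₁ ++ l₂) = Mmat l₂ * Mmat l₁ := by
  induction l₁ with
  | nil => simp [Mmat]
  | cons a t ih => simp [Mmat, ih, Matrix.mul_assoc]

theorem Mmat_singleton (x : R) : Mmat [x] = !![x, -1; 1, 0] := by
  simp [Mmat]

theorem Mmat_pair (x y : R) : Mmat [x, y] = !![y * x - 1, -y; x, -1] := by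
  simp [Mmat, sub_eq_add_neg]

theorem Mmat_triple (x y z : R) :
    Mmat [x, y, z] = !![(z * y - 1) * x - z, -(z * y - 1); y * x - 1, -y] := by
  ext i j
  fin_cases i <;> fin_cases j <;> simp [Mmat] <;> ring

theorem IsSolution.mid_eq_one_or_eq_neg_one {x y z : R} (h : IsSolution [x, y, z]) :
    y = 1 ∨ y = -1 := by
  rw [IsSolution, Mmat_triple] at h
  rcases h with h | h
  · right
    exact neg_eq_iff_eq_neg.mp (by simpa using congrFun (congrFun h 1) 1)
  · left
    exact neg_inj.mp (by simpa using congrFun (congrFun h 1) 1)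

theorem length_oplus (a b : List R) : (oplus a b).length = a.length + b.length - 2 := by
  simp [oplus]

theorem oplus_triple (a₀ a₁ a₂ b₀ b₁ b₂ : R) :
    oplus [a₀, a₁, a₂] [b₀, b₁, b₂] = [a₀ + b₂, a₁, a₂ + b₀, b₁] := by
  simp [oplus, List.ofFn_succ]

theorem not_reducible_replicate_four {c : R} (h₁ : c ≠ 1) (h₂ : c ≠ -1) :
    ¬ Reducible (List.replicate 4 c) := by
  rintro ⟨a, b, ha, hb, hbsol, hequiv⟩
  have hab := hequiv.eq_replicate
  have hlen := congrArg List.length hab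
  rw [length_oplus, List.length_replicate] at hlen
  obtain ⟨a₀, a₁, a₂, rfl⟩ := List.length_eq_three.mp (show a.length = 3 by omega)
  obtain ⟨b₀, b₁, b₂, rfl⟩ := List.length_eq_three.mp (show b.length = 3 by omega)
  have hb₁ : b₁ = c := by
    simp only [oplus_triple, List.replicate_succ, List.replicate_zero, List.cons.injEq] at hab
    exact hab.2.2.2.1
  subst hb₁
  rcases hbsol.mid_eq_one_or_eq_neg_one with h | h
  exacts [h₁ h, h₂ h]

theorem not_isSolution_singleton [Nontrivial R] (x : R) : ¬ IsSolution [x] := by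
  intro h
  have h₁₀ : Mmat [x] 1 0 = 1 := by simp [Mmat_singleton]
  rcases h with h | h <;> rw [h] at h₁₀ <;> simp at h₁₀

theorem not_isSolution_replicate_two {c : R} (hc : c ≠ 0) (h2 : (2 : R) ≠ 0) :
    ¬ IsSolution (List.replicate 2 c) := by
  rw [show List.replicate 2 c = [c, c] from rfl, IsSolution, Mmat_pair]
  rintro (h | h)
  · have h₁₁ := congrFun (congrFun h 1) 1
    simp only [of_apply, cons_val', cons_val_one, cons_val_fin_one, one_apply_eq] at h₁₁
    exact h2 (by linear_combination -h₁₁)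
  · exact hc (by simpa using congrFun (congrFun h 1) 0)

section SquareZero

variable {c : R} (hcc : c * c = 0)
include hcc

theorem Mmat_replicate_two_of_mul_self_eq_zero :
    Mmat (List.replicate 2 c) = !![-1, -c; c, -1] := by
  simp [List.replicate, Mmat_pair, hcc]

theorem Mmat_replicate_four_of_mul_self_eq_zero (h2c : c + c = 0) :
    Mmat (List.replicate 4 c) = 1 := by
  rw [show List.replicate 4 c = List.replicate 2 c ++ List.replicate 2 c by simp,
    Mmat_append, Mmat_replicate_two_of_mul_self_eq_zero hcc]
  ext i j
  fin_cases i <;> fin_cases j <;> simp [hcc, h2c, ← neg_add]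

theorem not_isSolution_replicate_three_of_mul_self_eq_zero [Nontrivial R] :
    ¬ IsSolution (List.replicate 3 c) := by
  intro h
  have h₀₁ : Mmat (List.replicate 3 c) 0 1 = 1 := by
    rw [show List.replicate 3 c = [c, c, c] from rfl, Mmat_triple]
    simp [hcc]
  rcases h with h | h <;> rw [h] at h₀₁ <;> simp at h₀₁

theorem isLeast_isSolution_replicate_of_mul_self_eq_zero [Nontrivial R] (h2c : c + c = 0)
    (hc : c ≠ 0) (h2 : (2 : R) ≠ 0) :
    IsLeast {n : ℕ | 0 < n ∧ IsSolution (List.replicate n c)} 4 := by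
  refine ⟨⟨by norm_num, Or.inl (Mmat_replicate_four_of_mul_self_eq_zero hcc h2c)⟩, ?_⟩
  rintro n ⟨hn, hsol⟩
  by_contra! hlt
  interval_cases n
  · exact not_isSolution_singleton c hsol
  · exact not_isSolution_replicate_two hc h2 hsol
  · exact not_isSolution_replicate_three_of_mul_self_eq_zero hcc hsol

end SquareZero

theorem ZMod.natCast_ne_zero_of_pos_of_lt {N k : ℕ} (hk : 0 < k) (hkN : k < N) :
    (k : ZMod N) ≠ 0 := by
  rw [Ne, ZMod.natCast_eq_zero_iff]
  exact fun h => hk.ne' (Nat.eq_zero_of_dvd_of_lt h hkN)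

theorem monomial_half_N_four_dvd_general (N : ℕ) (hN : 4 ≤ N) (h4 : 4 ∣ N) :
    IsLeast {n : ℕ | 0 < n ∧ IsSolution (List.replicate n ((N / 2 : ℕ) : ZMod N))} 4 ∧
    IsSolution (List.replicate 4 ((N / 2 : ℕ) : ZMod N)) ∧
    ¬ Reducible (List.replicate 4 ((N / 2 : ℕ) : ZMod N)) := by
  obtain ⟨m, hm⟩ := h4
  have : Fact (1 < N) := ⟨by omega⟩
  have hcast : ((N / 2 : ℕ) : ZMod N) = ((2 * m : ℕ) : ZMod N) := by congr 1; omega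
  rw [hcast]
  set c : ZMod N := ((2 * m : ℕ) : ZMod N)
  have hcc : c * c = 0 := by
    rw [← Nat.cast_mul, ZMod.natCast_eq_zero_iff]
    exact ⟨m, by rw [hm]; ring⟩
  have h2c : c + c = 0 := by
    rw [← Nat.cast_add, ZMod.natCast_eq_zero_iff]
    exact ⟨1, by omega⟩
  have hc : c ≠ 0 := ZMod.natCast_ne_zero_of_pos_of_lt (by omega) (by omega)
  have h2 : (2 : ZMod N) ≠ 0 := ZMod.natCast_ne_zero_of_pos_of_lt (k := 2) (by omega) (by omega)
  have hc₁ : c ≠ 1 := fun h => by simp [h] at hcc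
  have hc₂ : c ≠ -1 := fun h => by simp [h] at hcc
  exact ⟨isLeast_isSolution_replicate_of_mul_self_eq_zero hcc h2c hc h2,
    Or.inl (Mmat_replicate_four_of_mul_self_eq_zero hcc h2c),
    not_reducible_replicate_four hc₁ hc₂⟩

theorem monomial_half_N_four_dvd (N : ℕ) (hN : 4 ≤ N) (hNeven : 2 ∣ N) (h4 : 4 ∣ N) :
    IsLeast {n : ℕ | 0 < n ∧ IsSolution (List.replicate n ((N / 2 : ℕ) : ZMod N))} 4 ∧
    IsSolution (List.replicate 4 ((N / 2 : ℕ) : ZMod N)) ∧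
    ¬ Reducible (List.replicate 4 ((N / 2 : ℕ) : ZMod N)) :=
  monomial_half_N_four_dvd_general N hN h4
end

section
/- Let N be a prime number with N ≥ 5 and let k ∈ ℤ/Nℤ with k ≠ 0. Assume that k² + 8 is not a square in ℤ/Nℤ. Let n be the least even positive integer such that the alternating n-tuple (k, −k, k, −k, …, k, −k) is a solution of (E_N). Then this alternating n-tuple (k, −k, …, k, −k) is an irreducible solution of (E_N). -/
open Matrix

/-!
Writing `t = -(k² + 2)` and `sₘ = Sₘ(t)` for the rescaled Chebyshev polynomials, the alternating
tuple of length `2m` has matrix `[[sₘ₋₁ + sₘ, k sₘ₋₁], [k sₘ₋₁, (k² + 1) sₘ₋₁ + sₘ]]`, so by minimality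
of `n = 2r` no `sᵢ` with `i < r - 1` vanishes. If the tuple were `a ⊕ b` up to equivalence, the
interior of `b` would again be an alternating tuple, of length `j` with `1 ≤ j ≤ n - 3`, and since
`b` is a solution the top-left entry of its matrix is `±1`. Combined with the Cassini identity
`sᵢ² + sᵢ₊₁² - t sᵢ sᵢ₊₁ = 1`, this forces `k² sᵢ sᵢ₊₁ = 0` for some `i < r - 1` when `j` is even,
and exhibits a square root of `k² + 8` when `j` is odd.
-/

open Polynomial Polynomial.Chebyshev

namespace Dynomial

variable {R : Type*} [CommRing R]

@[simp]
lemma length_altList (n : ℕ) (k : R) : (altList n k).length = n := by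
  simp [altList]

@[simp]
lemma getElem_altList {n : ℕ} {k : R} {i : ℕ} (h : i < (altList n k).length) :
    (altList n k)[i] = (-1) ^ i * k := by
  rcases Nat.even_or_odd i with hi | hi
  · simp [altList, Nat.even_iff.mp hi, hi.neg_one_pow]
  · simp [altList, Nat.odd_iff.mp hi, hi.neg_one_pow]

lemma altList_succ (n : ℕ) (k : R) : altList (n + 1) k = k :: altList n (-k) :=
  List.ext_getElem (by simp) fun i _ _ => by cases i <;> simp [pow_succ]

lemma altList_rotate {n : ℕ} (hn : Even n) (k : R) (s : ℕ) :
    (altList n k).rotate s = altList n ((-1) ^ s * k) := by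
  refine List.ext_getElem (by simp) fun i _ _ => ?_
  rw [List.getElem_rotate, getElem_altList, getElem_altList, length_altList,
    neg_one_pow_eq_pow_mod_two, Nat.mod_mod_of_dvd _ hn.two_dvd, ← neg_one_pow_eq_pow_mod_two,
    pow_add, mul_assoc]

lemma altList_reverse {n : ℕ} (hn : Even n) (k : R) :
    (altList n k).reverse = altList n (-k) := by
  refine List.ext_getElem (by simp) fun i h _ => ?_
  have hi : i < n := by simpa using h
  have hparity : (-1 : R) ^ (n - 1 - i) = (-1) ^ (i + 1) := by
    refine neg_one_pow_congr ?_
    rw [Nat.even_iff] at hn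
    simp only [Nat.even_iff]
    omega
  rw [List.getElem_reverse, getElem_altList, getElem_altList, length_altList, hparity]
  ring

lemma neg_one_pow_mul_sq (s : ℕ) (x : R) : ((-1) ^ s * x) ^ 2 = x ^ 2 := by
  rw [mul_pow, ← pow_mul, pow_mul', neg_one_sq, one_pow, one_mul]

lemma exists_eq_altList_of_tupleEquiv {n : ℕ} (hn : Even n) {k : R} {c : List R}
    (h : TupleEquiv (altList n k) c) : ∃ k', k' ^ 2 = k ^ 2 ∧ c = altList n k' := by
  rcases h with ⟨s, rfl⟩ | ⟨s, rfl⟩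
  · exact ⟨_, neg_one_pow_mul_sq s k, altList_rotate hn k s⟩
  · exact ⟨_, (neg_one_pow_mul_sq s _).trans (neg_sq k),
      by rw [altList_reverse hn, altList_rotate hn]⟩

@[simp]
lemma length_oplus (a b : List R) : (oplus a b).length = a.length + b.length - 2 := by
  simp [oplus]

lemma getElem_oplus_length_add {a b : List R} (ha : a ≠ []) {i : ℕ} (hi : i + 2 < b.length) :
    (oplus a b)[a.length + i]'(by simp; omega) = b[i + 1] := by
  have ha : 0 < a.length := List.length_pos_of_ne_nil ha
  simp only [oplus, List.getElem_ofFn]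
  rw [if_neg (by omega), if_neg (by omega), if_neg (by omega),
    show a.length + i - a.length + 1 = i + 1 by omega, List.getD_eq_getElem]

lemma tail_dropLast_eq_altList {a b : List R} (ha : a ≠ []) {k : R}
    (h : oplus a b = altList (a.length + b.length - 2) k) :
    b.tail.dropLast = altList (b.length - 2) ((-1) ^ a.length * k) := by
  refine List.ext_getElem (by simp; omega) fun i hi _ => ?_
  have hi : i + 2 < b.length := by simp at hi; omega
  rw [List.getElem_dropLast, List.getElem_tail, ← getElem_oplus_length_add ha hi,
    List.getElem_of_eq h, getElem_altList, getElem_altList, pow_add]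
  ring

lemma Mmat_append (s u : List R) : Mmat (s ++ u) = Mmat u * Mmat s := by
  induction s with
  | nil => simp [Mmat]
  | cons x s ih => rw [List.cons_append, Mmat, Mmat, ih, mul_assoc]

lemma Mmat_cons_append_singleton_one_one (x y : R) (m : List R) :
    Mmat (x :: (m ++ [y])) 1 1 = -Mmat m 0 0 := by
  simp [Mmat, Mmat_append, Matrix.mul_apply, Fin.sum_univ_two, Matrix.vecMul, dotProduct]

lemma IsSolution.sq_Mmat_tail_dropLast_zero_zero {b : List R} (hb : IsSolution b) :
    Mmat b.tail.dropLast 0 0 ^ 2 = 1 := by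
  rcases b with _ | ⟨x, t⟩
  · simp [Mmat]
  rcases t.eq_nil_or_concat with rfl | ⟨m, y, rfl⟩
  · simp [Mmat]
  have h := Mmat_cons_append_singleton_one_one x y m
  rw [List.concat_eq_append] at hb ⊢
  rw [List.tail_cons, List.dropLast_concat, ← neg_sq, ← h]
  rcases hb with hb | hb <;> simp [hb]

lemma eval_S_sq_add_eval_S_sq (t : R) (i : ℤ) :
    (S R i).eval t ^ 2 + (S R (i + 1)).eval t ^ 2 - t * (S R i).eval t * (S R (i + 1)).eval t
      = 1 := by
  simpa using congrArg (eval t) (S_sq_add_S_sq R i)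

lemma Mmat_altList_two_mul (k : R) (m : ℕ) :
    Mmat (altList (2 * m) k) =
      !![(S R (m - 1)).eval (-(k ^ 2 + 2)) + (S R m).eval (-(k ^ 2 + 2)),
          k * (S R (m - 1)).eval (-(k ^ 2 + 2));
        k * (S R (m - 1)).eval (-(k ^ 2 + 2)),
          (k ^ 2 + 1) * (S R (m - 1)).eval (-(k ^ 2 + 2)) + (S R m).eval (-(k ^ 2 + 2))] := by
  induction m with
  | zero => simpa [altList, Mmat] using Matrix.one_fin_two
  | succ m ih =>
    rw [show 2 * (m + 1) = 2 * m + 1 + 1 by ring, altList_succ, altList_succ, neg_neg, Mmat, Mmat,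
      ih]
    push_cast
    rw [add_sub_cancel_right, S_add_one]
    ext i j
    fin_cases i <;> fin_cases j <;> simp [Matrix.mul_apply, Fin.sum_univ_two] <;> ring

lemma Mmat_altList_two_mul_add_one_zero_zero (k : R) (m : ℕ) :
    Mmat (altList (2 * m + 1) k) 0 0 = k * (S R m).eval (-(k ^ 2 + 2)) := by
  rw [altList_succ, Mmat, Mmat_altList_two_mul, neg_sq]
  simp [Matrix.mul_apply, Fin.sum_univ_two]
  ring

lemma isSolution_altList_two_mul [IsDomain R] {k : R} {m : ℕ}
    (h : (S R (m - 1)).eval (-(k ^ 2 + 2)) = 0) : IsSolution (altList (2 * m) k) := by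
  have hcas := eval_S_sq_add_eval_S_sq (-(k ^ 2 + 2)) (m - 1)
  rw [sub_add_cancel, h] at hcas
  rcases sq_eq_one_iff.mp (by linear_combination hcas) with h1 | h1 <;>
    rw [IsSolution, Mmat_altList_two_mul, h, h1] <;> simp [Matrix.one_fin_two]

lemma sq_mul_eval_S_mul_eval_S_eq_zero {k : R} {m : ℕ}
    (h : Mmat (altList (2 * m) k) 0 0 ^ 2 = 1) :
    k ^ 2 * ((S R (m - 1)).eval (-(k ^ 2 + 2)) * (S R m).eval (-(k ^ 2 + 2))) = 0 := by
  have hcas := eval_S_sq_add_eval_S_sq (-(k ^ 2 + 2)) (m - 1)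
  rw [sub_add_cancel] at hcas
  rw [Mmat_altList_two_mul] at h
  simp only [Matrix.of_apply, Matrix.cons_val_zero] at h
  linear_combination hcas - h

lemma exists_sq_eq_sq_add_eight {k : R} {m : ℕ}
    (h : Mmat (altList (2 * m + 1) k) 0 0 ^ 2 = 1) : ∃ y, y ^ 2 = k ^ 2 + 8 := by
  have hcas := eval_S_sq_add_eval_S_sq (-(k ^ 2 + 2)) (m - 1)
  rw [sub_add_cancel] at hcas
  rw [Mmat_altList_two_mul_add_one_zero_zero] at h
  refine ⟨2 * (S R (m - 1)).eval (-(k ^ 2 + 2)) + (k ^ 2 + 2) * (S R m).eval (-(k ^ 2 + 2)), ?_⟩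
  linear_combination 4 * hcas + (k ^ 2 + 4) * h

theorem not_reducible_altList_of_isLeast [IsDomain R] {k : R} (hk : k ≠ 0)
    (hsq : ¬ ∃ y, y ^ 2 = k ^ 2 + 8) {n : ℕ}
    (hn : IsLeast {m : ℕ | 0 < m ∧ Even m ∧ IsSolution (altList m k)} n) :
    ¬ Reducible (altList n k) := by
  obtain ⟨⟨-, hn_even, -⟩, hmin⟩ := hn
  have hS (q : ℕ) (hq : 0 < q) (hqn : 2 * q < n) : (S R (q - 1)).eval (-(k ^ 2 + 2)) ≠ 0 :=
    fun h0 => (hmin ⟨by omega, even_two_mul q, isSolution_altList_two_mul h0⟩).not_gt hqn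
  rintro ⟨a, b, ha, hb, hb_sol, hequiv⟩
  obtain ⟨k', hk', hab⟩ := exists_eq_altList_of_tupleEquiv hn_even hequiv
  have hlen : n = a.length + b.length - 2 := by simpa using (congrArg List.length hab).symm
  have hk_sq : ((-1) ^ a.length * k') ^ 2 = k ^ 2 := (neg_one_pow_mul_sq _ _).trans hk'
  have h00 := IsSolution.sq_Mmat_tail_dropLast_zero_zero hb_sol
  rw [tail_dropLast_eq_altList (List.ne_nil_of_length_pos (by omega)) (hlen ▸ hab)] at h00
  obtain ⟨m, hm | hm⟩ := Nat.even_or_odd' (b.length - 2)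
  · rw [hm] at h00
    have hzero := sq_mul_eval_S_mul_eval_S_eq_zero h00
    rw [hk_sq] at hzero
    rcases mul_eq_zero.mp hzero with h | h
    · exact hk (pow_eq_zero_iff two_ne_zero |>.mp h)
    rcases mul_eq_zero.mp h with h | h
    · exact hS m (by omega) (by omega) h
    · exact hS (m + 1) (by omega) (by omega) (by simpa using h)
  · rw [hm] at h00
    exact hsq (hk_sq ▸ exists_sq_eq_sq_add_eight h00)

end Dynomial

theorem dynomial_minimal_irreducible_general (N : ℕ) (hp : N.Prime)
    (k : ZMod N) (hk : k ≠ 0)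
    (hsq : ¬ ∃ y : ZMod N, y ^ 2 = k ^ 2 + 8)
    (n : ℕ) (hn : IsLeast {m : ℕ | 0 < m ∧ Even m ∧ IsSolution (altList m k)} n) :
    IsSolution (altList n k) ∧ ¬ Reducible (altList n k) :=
  haveI : Fact N.Prime := ⟨hp⟩
  ⟨hn.1.2.2, Dynomial.not_reducible_altList_of_isLeast hk hsq hn⟩

theorem dynomial_minimal_irreducible (N : ℕ) (hp : N.Prime) (hN : 5 ≤ N)
    (k : ZMod N) (hk : k ≠ 0)
    (hsq : ¬ ∃ y : ZMod N, y ^ 2 = k ^ 2 + 8)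
    (n : ℕ) (hn : IsLeast {m : ℕ | 0 < m ∧ Even m ∧ IsSolution (altList m k)} n) :
    IsSolution (altList n k) ∧ ¬ Reducible (altList n k) :=
  dynomial_minimal_irreducible_general N hp k hk hsq n hn
end

section
/- Let N be a prime number with N ≥ 2 and let k ∈ ℤ/Nℤ with k = 2 or k = −2. Then the least positive integer n such that the constant n-tuple (k, …, k) satisfies M_n(k, …, k) = Id or = −Id is n = N. -/
open Matrix

/-! Write `k = 2ε` with `ε = ±1`. Then `[[k, -1], [1, 0]] = ε • (1 + U)` with
`U = [[1, -ε], [ε, -1]]` and `U² = 0`, so its `n`-th power is `εⁿ • (1 + n • U)`.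
Its lower-left entry `εⁿ⁺¹ n` vanishes iff `n = 0` in the ring, and then the power is `εⁿ • 1 = ±1`.
So the monomial solutions are exactly the replicates of length a multiple of the characteristic. -/

theorem Mmat_replicate {R : Type*} [CommRing R] (n : ℕ) (k : R) :
    Mmat (List.replicate n k) = !![k, -1; 1, 0] ^ n := by
  induction n with
  | zero => rfl
  | succ n ih => rw [List.replicate_succ, Mmat, ih, pow_succ]

theorem pow_eq_one_add_nsmul_of_mul_self_eq_zero {A : Type*} [Semiring A] {U : A}
    (hU : U * U = 0) (n : ℕ) : (1 + U) ^ n = 1 + n • U := by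
  induction n with
  | zero => simp
  | succ n ih =>
    rw [pow_succ, ih, add_mul, one_mul, mul_add, mul_one, smul_mul_assoc, hU, smul_zero, add_zero,
      succ_nsmul]
    abel

section Monomial

variable {R : Type*} [CommRing R] {ε : R}

theorem companion_two_mul_pow (hε : ε * ε = 1) (n : ℕ) :
    !![2 * ε, -1; 1, 0] ^ n = ε ^ n • !![1 + (n : R), -(ε * n); ε * n, 1 - n] := by
  set U : Matrix (Fin 2) (Fin 2) R := !![1, -ε; ε, -1]
  have hU : U * U = 0 := by
    ext i j; fin_cases i <;> fin_cases j <;> simp [U, Matrix.mul_apply, hε]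
  have hM : !![2 * ε, -1; 1, 0] = ε • (1 + U) := by
    ext i j; fin_cases i <;> fin_cases j <;> simp [U, hε]; ring
  rw [hM, smul_pow, pow_eq_one_add_nsmul_of_mul_self_eq_zero hU]
  congr 1
  ext i j; fin_cases i <;> fin_cases j <;> simp [U] <;> ring

theorem isSolution_replicate_two_mul_iff (hε : ε = 1 ∨ ε = -1) (n : ℕ) :
    IsSolution (List.replicate n (2 * ε)) ↔ (n : R) = 0 := by
  have hεε : ε * ε = 1 := by rcases hε with rfl | rfl <;> simp
  have hunit : IsUnit ε := IsUnit.of_mul_eq_one_right ε hεε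
  rw [IsSolution, Mmat_replicate, companion_two_mul_pow hεε]
  constructor
  · intro h
    have hlowerLeft : ε ^ n * (ε * n) = 0 := by
      rcases h with h | h <;> simpa using congrFun (congrFun h 1) 0
    exact ((hunit.pow n).mul hunit).mul_right_eq_zero.mp (by rwa [← mul_assoc] at hlowerLeft)
  · intro hn
    have hpow : ε ^ n = 1 ∨ ε ^ n = -1 := by
      rcases hε with rfl | rfl
      · simp
      · exact neg_one_pow_eq_or R n
    have hId : !![1 + (n : R), -(ε * n); ε * n, 1 - n] = 1 := by
      rw [hn, Matrix.one_fin_two]; simp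
    rcases hpow with h | h <;> simp [hId, h]

theorem isSolution_replicate_iff {k : R} (hk : k = 2 ∨ k = -2) (n : ℕ) :
    IsSolution (List.replicate n k) ↔ ringChar R ∣ n := by
  obtain ⟨ε, hε, rfl⟩ : ∃ ε : R, (ε = 1 ∨ ε = -1) ∧ k = 2 * ε := by
    rcases hk with rfl | rfl
    exacts [⟨1, by simp⟩, ⟨-1, by simp⟩]
  rw [isSolution_replicate_two_mul_iff hε, ringChar.spec]

theorem isLeast_replicate_isSolution_ringChar (hR : 0 < ringChar R) {k : R}
    (hk : k = 2 ∨ k = -2) :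
    IsLeast {n : ℕ | 0 < n ∧ IsSolution (List.replicate n k)} (ringChar R) := by
  simp only [isSolution_replicate_iff hk]
  exact ⟨⟨hR, dvd_rfl⟩, fun n ⟨hn, hdvd⟩ => Nat.le_of_dvd hn hdvd⟩

end Monomial

theorem monomial_minimal_size_of_eq_two_general (N : ℕ) (hN : 2 ≤ N)
    (k : ZMod N) (hk : k = 2 ∨ k = -2) :
    IsLeast {n : ℕ | 0 < n ∧ IsSolution (List.replicate n k)} N := by
  have hchar : ringChar (ZMod N) = N := ZMod.ringChar_zmod_n N
  simpa only [hchar] using isLeast_replicate_isSolution_ringChar (by omega) hk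

theorem monomial_minimal_size_of_eq_two (N : ℕ) (hp : N.Prime) (hN : 2 ≤ N)
    (k : ZMod N) (hk : k = 2 ∨ k = -2) :
    IsLeast {n : ℕ | 0 < n ∧ IsSolution (List.replicate n k)} N :=
  monomial_minimal_size_of_eq_two_general N hN k hk
end

section
/- Let n and l be positive integers with n ≥ 3 and l ≥ 2, and let j be an integer with 2 ≤ j ≤ n−1. Then l^{n−j} divides the binomial coefficient C(2·l^{n−2}, j). -/
/-!
Write `m = 2 l^(n-2)`. From `m * C(m-1, j-1) = C(m, j) * j` we get
`v_p(C(m, j)) ≥ v_p(m) - v_p(j) = v_p(2) + (n-2) v_p(l) - v_p(j)` for every prime `p`.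
Since `p^(v_p(j)) ≤ j`, Bernoulli's inequality gives `v_p(j) ≤ (j-2) + v_p(2)`, and when `p ∣ l`
the term `j - 2` is at most `(j-2) v_p(l)`; hence `v_p(C(m, j)) ≥ (n-j) v_p(l)`.
-/

namespace Nat

theorem factorization_add_two_le (p i : ℕ) :
    (i + 2).factorization p ≤ i + (2 : ℕ).factorization p := by
  by_cases hp : p.Prime
  swap
  · simp [factorization_eq_zero_of_not_prime _ hp]
  rcases eq_or_ne p 2 with rfl | hp2
  · rw [prime_two.factorization_self]
    exact factorization_le_of_le_pow Nat.lt_two_pow_self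
  rcases eq_or_ne i 0 with rfl | hi
  · simp
  have h3 : 3 ≤ p := lt_of_le_of_ne hp.two_le hp2.symm
  refine (factorization_le_of_le_pow ?_).trans (le_add_right _ _)
  have hbernoulli := one_add_le_pow_of_two_add_nonneg (a := p - 1) (by omega) i
  rw [Nat.cast_id, show 1 + (p - 1) = p by omega] at hbernoulli
  have : i * 2 ≤ i * (p - 1) := Nat.mul_le_mul_left i (by omega)
  omega

theorem pow_dvd_choose_two_mul_pow_add (l r i : ℕ) : l ^ r ∣ (2 * l ^ (r + i)).choose (i + 2) := by
  rcases eq_or_ne l 0 with rfl | hl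
  · rcases r with _ | r <;> simp
  by_cases him : i + 2 ≤ 2 * l ^ (r + i)
  swap
  · rw [choose_eq_zero_of_lt (not_le.1 him)]
    exact dvd_zero _
  rw [← factorization_le_iff_dvd (pow_ne_zero _ hl) (choose_pos him).ne']
  intro p
  have hchoose := factorization_le_factorization_choose_add (p := p) him (by omega)
  rw [factorization_mul two_ne_zero (pow_ne_zero _ hl)] at hchoose
  simp only [factorization_pow, Finsupp.coe_add, Finsupp.coe_smul, Pi.add_apply, Pi.smul_apply,
    smul_eq_mul] at hchoose ⊢
  have hj := factorization_add_two_le p i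
  rcases eq_or_ne (l.factorization p) 0 with h0 | hpos
  · simp [h0]
  have : i ≤ i * l.factorization p := Nat.le_mul_of_pos_right i (pos_of_ne_zero hpos)
  rw [add_mul] at hchoose
  omega

end Nat

theorem pow_dvd_choose_two_mul_pow_general (n l j : ℕ) (hj : 2 ≤ j) (hj' : j ≤ n - 1) :
    l ^ (n - j) ∣ Nat.choose (2 * l ^ (n - 2)) j := by
  obtain ⟨i, rfl⟩ : ∃ i, j = i + 2 := ⟨j - 2, by omega⟩
  rw [show n - 2 = n - (i + 2) + i by omega]
  exact Nat.pow_dvd_choose_two_mul_pow_add l (n - (i + 2)) i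

theorem pow_dvd_choose_two_mul_pow (n l j : ℕ) (hn : 3 ≤ n) (hl : 2 ≤ l)
    (hj : 2 ≤ j) (hj' : j ≤ n - 1) :
    l ^ (n - j) ∣ Nat.choose (2 * l ^ (n - 2)) j :=
  pow_dvd_choose_two_mul_pow_general n l j hj hj'
end
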